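/- arXiv:1909.01852 — 6 statements merged into one kernel-verified Lean document; each statement's English description precedes it below -/
import Mathlib

section
/- With notation as in the Eichler-trick setup: let M ∈ K^{m×m} be symmetric, τ = (τ_1,…,τ_d) a tuple of complex symmetric n×n matrices, Z_0(τ) the block matrix whose (i,j) block (1 ≤ i,j ≤ n) is diag(τ_{i,j}^{(1)} M^{(1)}, …, τ_{i,j}^{(d)} M^{(d)}), and Z_1(τ) = ᵗG' Z_0(τ) G'. Then for every U ∈ K^{m×n}, Σ_{w=1}^d σ(M[U]^{(w)} τ^{(w)}) = ᵗφ'(U) Z_1(τ) φ'(U), where M[U] = ᵗU M U and σ is the matrix trace. -/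
open Matrix Kronecker

/-!
Expanding `U` in the integral basis gives `ψ_w(U_{s i}) = Σ_p c_{s p i} G_{w p}`, so `G' φ'(U)` is
the vector of entries of all conjugates `U^{(w)}`, and `ᵗφ' Z₁ φ' = ᵗ(G' φ') Z₀ (G' φ')`. As `Z₀` is
block diagonal in the embedding index, this quadratic form splits into
`Σ_w Σ_{i,j,s,t} U^{(w)}_{s i} τ^{(w)}_{i j} M^{(w)}_{s t} U^{(w)}_{t j} = Σ_w σ(M[U^{(w)}] ᵗτ^{(w)})`,
and `ᵗτ^{(w)} = τ^{(w)}`.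
-/

namespace Matrix

variable {R : Type*} [CommSemiring R] {ι κ κ' μ : Type*}

theorem map_one_kronecker_kronecker_one {S : Type*} [Semiring S] [DecidableEq ι] [DecidableEq μ]
    (f : R →+* S) (A : Matrix κ κ' R) :
    ((1 : Matrix ι ι R) ⊗ₖ A ⊗ₖ (1 : Matrix μ μ R)).map f =
      (1 : Matrix ι ι S) ⊗ₖ A.map f ⊗ₖ (1 : Matrix μ μ S) := by
  ext ⟨⟨i, a⟩, s⟩ ⟨⟨j, b⟩, t⟩
  simp only [map_apply, kronecker_apply, one_apply]
  split_ifs <;> simp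

theorem one_kronecker_kronecker_one_mulVec_apply [Fintype ι] [Fintype κ'] [Fintype μ]
    [DecidableEq ι] [DecidableEq μ] (A : Matrix κ κ' R) (v : (ι × κ') × μ → R)
    (i : ι) (a : κ) (s : μ) :
    ((1 : Matrix ι ι R) ⊗ₖ A ⊗ₖ (1 : Matrix μ μ R) *ᵥ v) ((i, a), s) =
      ∑ b, A a b * v ((i, b), s) := by
  simp [mulVec, dotProduct, one_apply, Fintype.sum_prod_type, ite_mul]

theorem dotProduct_transpose_mul_mul_mulVec [Fintype ι] (A B : Matrix ι ι R) (x : ι → R) :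
    x ⬝ᵥ (Aᵀ * B * A) *ᵥ x = (A *ᵥ x) ⬝ᵥ B *ᵥ (A *ᵥ x) := by
  rw [← mulVec_mulVec, ← mulVec_mulVec, dotProduct_mulVec, vecMul_transpose]

variable [Fintype ι] [Fintype κ] [Fintype μ]

theorem trace_transpose_mul_mul_mul_transpose (X : Matrix μ ι R) (N : Matrix μ μ R)
    (T : Matrix ι ι R) :
    trace (Xᵀ * N * X * Tᵀ) = ∑ i, ∑ j, ∑ s, ∑ t, X s i * N s t * X t j * T i j := by
  simp only [trace, diag, mul_apply, transpose_apply, Finset.sum_mul]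
  exact Fintype.sum_congr _ _ fun i => Fintype.sum_congr _ _ fun j => Finset.sum_comm

theorem dotProduct_mulVec_eq_sum_trace [DecidableEq κ] {Z : Matrix ((ι × κ) × μ) ((ι × κ) × μ) R}
    (T : κ → Matrix ι ι R) (N : κ → Matrix μ μ R)
    (hZ : ∀ i j w w' s t, Z ((i, w), s) ((j, w'), t) = if w = w' then T w i j * N w s t else 0)
    (X : κ → Matrix μ ι R) :
    (fun a => X a.1.2 a.2 a.1.1) ⬝ᵥ Z *ᵥ (fun a => X a.1.2 a.2 a.1.1) =
      ∑ w, trace ((X w)ᵀ * N w * X w * (T w)ᵀ) := by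
  have hZX : ∀ i w s, (Z *ᵥ fun a => X a.1.2 a.2 a.1.1) ((i, w), s) =
      ∑ j, ∑ t, T w i j * N w s t * X w t j := by
    intro i w s
    simp only [mulVec, dotProduct, Fintype.sum_prod_type, hZ, ite_mul, zero_mul]
    rw [Finset.sum_comm]
    simp only [Finset.sum_ite_irrel, Finset.sum_const_zero, Finset.sum_ite_eq, Finset.mem_univ,
      if_true]
  simp only [trace_transpose_mul_mul_mul_transpose, dotProduct, Fintype.sum_prod_type, hZX,
    Finset.mul_sum]
  rw [Finset.sum_comm]
  refine Fintype.sum_congr _ _ fun w => Fintype.sum_congr _ _ fun i => ?_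
  rw [Finset.sum_comm]
  exact Fintype.sum_congr _ _ fun j => Fintype.sum_congr _ _ fun s => Fintype.sum_congr _ _
    fun t => by ring

end Matrix

theorem eichler_quadratic_identity_general
    (K : Type*) [Field K] (d m n : ℕ)
    (γ : Module.Basis (Fin d) ℤ (NumberField.RingOfIntegers K))
    (ψ : Fin d → (K →+* ℝ))
    (M : Matrix (Fin m) (Fin m) K)
    (τ : Fin d → Matrix (Fin n) (Fin n) ℂ) (hτ : ∀ w, (τ w)ᵀ = τ w)
    (U : Matrix (Fin m) (Fin n) K)
    (c : Fin m → Fin d → Fin n → ℚ)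
    (hc : ∀ (i : Fin m) (w : Fin n),
      U i w = ∑ j : Fin d, (c i j w : K) * algebraMap (NumberField.RingOfIntegers K) K (γ j))
    (G : Matrix (Fin d) (Fin d) ℝ)
    (hG : ∀ i j, G i j = ψ i (algebraMap (NumberField.RingOfIntegers K) K (γ j)))
    (G' : Matrix ((Fin n × Fin d) × Fin m) ((Fin n × Fin d) × Fin m) ℝ)
    (hG' : G' = (1 : Matrix (Fin n) (Fin n) ℝ) ⊗ₖ G ⊗ₖ (1 : Matrix (Fin m) (Fin m) ℝ))
    (φ' : (Fin n × Fin d) × Fin m → ℂ)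
    (hφ' : ∀ (w : Fin n) (j : Fin d) (i : Fin m), φ' ((w, j), i) = (c i j w : ℂ))
    (Z₀ : Matrix ((Fin n × Fin d) × Fin m) ((Fin n × Fin d) × Fin m) ℂ)
    (hZ₀ : ∀ (i j : Fin n) (w w' : Fin d) (s t : Fin m),
      Z₀ ((i, w), s) ((j, w'), t) =
        if w = w' then τ w i j * (ψ w (M s t) : ℂ) else 0)
    (Z₁ : Matrix ((Fin n × Fin d) × Fin m) ((Fin n × Fin d) × Fin m) ℂ)
    (hZ₁ : Z₁ = (G'.map Complex.ofReal)ᵀ * Z₀ * G'.map Complex.ofReal) :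
    ∑ w : Fin d,
        Matrix.trace (((Uᵀ * M * U).map fun x => ((ψ w x : ℝ) : ℂ)) * τ w)
      = φ' ⬝ᵥ Z₁.mulVec φ' := by
  set φ : Fin d → K →+* ℂ := fun w => Complex.ofRealHom.comp (ψ w)
  set X : Fin d → Matrix (Fin m) (Fin n) ℂ := fun w => U.map (φ w)
  have hGφ' : G'.map Complex.ofRealHom *ᵥ φ' = fun a => X a.1.2 a.2 a.1.1 := by
    ext ⟨⟨i, w⟩, s⟩
    rw [hG', map_one_kronecker_kronecker_one, one_kronecker_kronecker_one_mulVec_apply]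
    simp [X, φ, hc, hG, hφ', map_sum, mul_comm]
  calc ∑ w, trace ((Uᵀ * M * U).map (φ w) * τ w)
      = ∑ w, trace ((X w)ᵀ * M.map (φ w) * X w * (τ w)ᵀ) := by
        simp only [X, Matrix.map_mul, transpose_map, hτ]
    _ = (G'.map Complex.ofRealHom *ᵥ φ') ⬝ᵥ Z₀ *ᵥ (G'.map Complex.ofRealHom *ᵥ φ') := by
        rw [hGφ']
        exact (dotProduct_mulVec_eq_sum_trace τ (fun w => M.map (φ w)) hZ₀ X).symm
    _ = φ' ⬝ᵥ Z₁ *ᵥ φ' := by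
        rw [hZ₁, dotProduct_transpose_mul_mul_mulVec]
        rfl

/-- Eichler-trick quadratic identity: `Σ_w σ(M[U]^{(w)} τ^{(w)}) = ᵗφ'(U) Z₁(τ) φ'(U)`,
where `Z₀(τ)` has `(i,j)` block `diag(τ_{i,j}^{(1)} M^{(1)}, …, τ_{i,j}^{(d)} M^{(d)})` and
`Z₁(τ) = ᵗG' Z₀(τ) G'` for `G' = I_n ⊗ G ⊗ I_m`. -/
theorem eichler_quadratic_identity
    (K : Type*) [Field K] [NumberField K] (d m n : ℕ)
    (hd : Module.finrank ℚ K = d)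
    (γ : Module.Basis (Fin d) ℤ (NumberField.RingOfIntegers K))
    (ψ : Fin d → (K →+* ℝ)) (hψ : Function.Injective ψ)
    (M : Matrix (Fin m) (Fin m) K) (hM : Mᵀ = M)
    (τ : Fin d → Matrix (Fin n) (Fin n) ℂ) (hτ : ∀ w, (τ w)ᵀ = τ w)
    (U : Matrix (Fin m) (Fin n) K)
    (c : Fin m → Fin d → Fin n → ℚ)
    (hc : ∀ (i : Fin m) (w : Fin n),
      U i w = ∑ j : Fin d, (c i j w : K) * algebraMap (NumberField.RingOfIntegers K) K (γ j))
    (G : Matrix (Fin d) (Fin d) ℝ)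
    (hG : ∀ i j, G i j = ψ i (algebraMap (NumberField.RingOfIntegers K) K (γ j)))
    (G' : Matrix ((Fin n × Fin d) × Fin m) ((Fin n × Fin d) × Fin m) ℝ)
    (hG' : G' = (1 : Matrix (Fin n) (Fin n) ℝ) ⊗ₖ G ⊗ₖ (1 : Matrix (Fin m) (Fin m) ℝ))
    (φ' : (Fin n × Fin d) × Fin m → ℂ)
    (hφ' : ∀ (w : Fin n) (j : Fin d) (i : Fin m), φ' ((w, j), i) = (c i j w : ℂ))
    (Z₀ : Matrix ((Fin n × Fin d) × Fin m) ((Fin n × Fin d) × Fin m) ℂ)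
    (hZ₀ : ∀ (i j : Fin n) (w w' : Fin d) (s t : Fin m),
      Z₀ ((i, w), s) ((j, w'), t) =
        if w = w' then τ w i j * (ψ w (M s t) : ℂ) else 0)
    (Z₁ : Matrix ((Fin n × Fin d) × Fin m) ((Fin n × Fin d) × Fin m) ℂ)
    (hZ₁ : Z₁ = (G'.map Complex.ofReal)ᵀ * Z₀ * G'.map Complex.ofReal) :
    ∑ w : Fin d,
        Matrix.trace (((Uᵀ * M * U).map fun x => ((ψ w x : ℝ) : ℂ)) * τ w)
      = φ' ⬝ᵥ Z₁.mulVec φ' :=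
  eichler_quadratic_identity_general K d m n γ ψ M τ hτ U c hc G hG G' hG' φ' hφ' Z₀ hZ₀ Z₁ hZ₁
end

section
/- Let A, B, C, D be n×n matrices over a commutative ring (or field) forming a symplectic matrix (so ᵗAC = ᵗCA, ᵗBD = ᵗDB, ᵗAD − ᵗCB = I), with C τ + D and D invertible. Then (Aτ + B)(Cτ + D)^{-1} = ᵗD^{-1} ᵗB + ᵗD^{-1} τ (Cτ + D)^{-1}. -/
open Matrix

/-- For a symplectic block matrix `(A B; C D)` with `Cτ + D` and `D` invertible,
`(Aτ + B)(Cτ + D)⁻¹ = ᵗD⁻¹ ᵗB + ᵗD⁻¹ τ (Cτ + D)⁻¹`. -/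
theorem symplectic_fractional_transformation
    (F : Type*) [Field F] (n : ℕ)
    (τ A B C D : Matrix (Fin n) (Fin n) F)
    (h1 : Aᵀ * C = Cᵀ * A) (h2 : Bᵀ * D = Dᵀ * B) (h3 : Aᵀ * D - Cᵀ * B = 1)
    (h4 : IsUnit (C * τ + D).det) (h5 : IsUnit D.det) :
    (A * τ + B) * (C * τ + D)⁻¹ = (Dᵀ)⁻¹ * Bᵀ + (Dᵀ)⁻¹ * τ * (C * τ + D)⁻¹ := by
  have hDT : IsUnit (Dᵀ).det := by rwa [det_transpose]
  have h3' : Dᵀ * A - Bᵀ * C = 1 := by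
    have := congrArg Matrix.transpose h3
    simpa [Matrix.transpose_sub, Matrix.transpose_mul] using this
  have hDA : Dᵀ * A = 1 + Bᵀ * C := by
    rw [← h3']; noncomm_ring
  have key : Dᵀ * (A * τ + B) = Bᵀ * (C * τ + D) + τ := by
    rw [Matrix.mul_add, Matrix.mul_add, ← Matrix.mul_assoc, ← Matrix.mul_assoc, hDA, ← h2]
    noncomm_ring
  have key2 : A * τ + B = (Dᵀ)⁻¹ * (Bᵀ * (C * τ + D) + τ) := by
    rw [← key, ← Matrix.mul_assoc, Matrix.nonsing_inv_mul _ hDT, Matrix.one_mul]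
  rw [key2, Matrix.mul_assoc, Matrix.add_mul, Matrix.mul_assoc,
    Matrix.mul_nonsing_inv _ h4, Matrix.mul_one, Matrix.mul_add, ← Matrix.mul_assoc]
end

section
/- With notation as above (P ∤ 2O, ω generating ∂^{-1}P^{-1} locally at P), the Gauss sum g = Σ_{x ∈ O/P} e{2x²ω} satisfies g² = (−1/P)·N(P), where N(P) = |O/P|. -/
/-!
The map `a ↦ exp(2πi Tr(aω))` is an additive character of `O`. It is trivial on `P`, since
`ωP ⊆ ∂⁻¹`, the trace dual of `O`; and it is nontrivial, since `ω ∈ ∂⁻¹` would give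
`J = ω∂P ⊆ P`. Hence it descends to a nontrivial additive character `ψ` of the finite field
`O/P` of odd characteristic, and `g = Σ ψ(x²)` is the Gauss sum of `ψ` with the quadratic
character `χ` of `O/P`, whose square is `χ(-1)·|O/P|`.
-/

open Finset NumberField
open scoped nonZeroDivisors

section QuadraticGaussSum

variable {F R : Type*} [Field F] [Fintype F] [DecidableEq F] [CommRing R]

lemma quadraticChar_neg_one_eq_ite [Decidable (IsSquare (-1 : F))] :
    (quadraticChar F (-1) : R) = if IsSquare (-1 : F) then 1 else -1 := by
  split_ifs with h
  · simp [(quadraticChar_one_iff_isSquare (neg_ne_zero.mpr one_ne_zero)).mpr h]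
  · simp [quadraticChar_neg_one_iff_not_isSquare.mpr h]

variable [IsDomain R] [CharZero R]

lemma sum_addChar_sq_eq_gaussSum (hF : ringChar F ≠ 2) {ψ : AddChar F R} (hψ : ψ ≠ 1) :
    ∑ x, ψ (x ^ 2) = gaussSum ((quadraticChar F).ringHomComp (Int.castRingHom R)) ψ := by
  have hfiber (a : F) : (#{x | x ^ 2 = a} : R) = quadraticChar F a + 1 := by
    have := quadraticChar_card_sqrts hF a
    rw [Set.toFinset_ofPred] at this
    exact_mod_cast congrArg (Int.cast : ℤ → R) this
  calc ∑ x, ψ (x ^ 2) = ∑ a, (#{x | x ^ 2 = a} : R) * ψ a := by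
        rw [← sum_fiberwise' univ (· ^ 2) ψ]
        simp only [sum_const, nsmul_eq_mul]
    _ = ∑ a, (quadraticChar F a : R) * ψ a + ∑ a, ψ a := by
        simp only [hfiber, add_mul, one_mul, sum_add_distrib]
    _ = _ := by
        rw [AddChar.sum_eq_zero_iff_ne_zero.mpr hψ, add_zero]
        rfl

theorem sq_sum_addChar_sq (hF : ringChar F ≠ 2) {ψ : AddChar F R} (hψ : ψ ≠ 1)
    [Decidable (IsSquare (-1 : F))] :
    (∑ x, ψ (x ^ 2)) ^ 2 = (if IsSquare (-1 : F) then 1 else -1) * Fintype.card F := by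
  rw [sum_addChar_sq_eq_gaussSum hF hψ,
    gaussSum_sq ((MulChar.ringHomComp_ne_one_iff (RingHom.injective_int _)).mpr
      (quadraticChar_ne_one hF)) ((quadraticChar_isQuadratic F).comp _)
      (AddChar.IsPrimitive.of_ne_one hψ),
    MulChar.ringHomComp_apply, eq_intCast, quadraticChar_neg_one_eq_ite]

end QuadraticGaussSum

namespace AddChar

variable {R M : Type*} [CommRing R] [Monoid M]

def liftQuotient (ψ : AddChar R M) (I : Ideal R) (hψ : ∀ a ∈ I, ψ a = 1) :
    AddChar (R ⧸ I) M where
  toFun := Quotient.lift ψ fun a b hab => by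
    rw [← sub_add_cancel a b, map_add_eq_mul, hψ _ ((Submodule.quotientRel_def _).mp hab),
      one_mul]
  map_zero_eq_one' := ψ.map_zero_eq_one
  map_add_eq_mul' := by
    rintro ⟨a⟩ ⟨b⟩
    exact ψ.map_add_eq_mul a b

@[simp]
lemma liftQuotient_mk (ψ : AddChar R M) (I : Ideal R) (hψ : ∀ a ∈ I, ψ a = 1) (a : R) :
    ψ.liftQuotient I hψ (Ideal.Quotient.mk I a) = ψ a :=
  rfl

lemma liftQuotient_ne_one {ψ : AddChar R M} {I : Ideal R} {hψ : ∀ a ∈ I, ψ a = 1}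
    (h : ψ ≠ 1) : ψ.liftQuotient I hψ ≠ 1 := by
  obtain ⟨a, ha⟩ := ne_one_iff.mp h
  exact ne_one_iff.mpr ⟨Ideal.Quotient.mk I a, ha⟩

end AddChar

lemma Ideal.ringChar_quotient_ne_two {R : Type*} [CommRing R] {P : Ideal R}
    (hP : (2 : R) ∉ P) : ringChar (R ⧸ P) ≠ 2 := by
  intro h
  apply hP
  rw [← Ideal.Quotient.eq_zero_iff_mem, map_ofNat]
  exact_mod_cast h ▸ ringChar.Nat.cast_ringChar

namespace FractionalIdeal

variable {A K : Type*} [CommRing A] [IsDedekindDomain A] [Field K] [Algebra A K]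
  [IsFractionRing A K] {x : K} {D P J : Ideal A}

lemma mul_mem_inv_of_spanSingleton_mul_eq (hD : D ≠ ⊥)
    (h : spanSingleton A⁰ x * ↑(D * P) = (J : FractionalIdeal A⁰ K)) {p : A} (hp : p ∈ P) :
    algebraMap A K p * x ∈ (D : FractionalIdeal A⁰ K)⁻¹ := by
  have hle : spanSingleton A⁰ x * P ≤ (D : FractionalIdeal A⁰ K)⁻¹ := by
    rw [← one_mul (D : FractionalIdeal A⁰ K)⁻¹,
      le_mul_inv_iff₀ (pos_iff_ne_zero.mpr (by simpa)), mul_right_comm, mul_assoc,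
      ← coeIdeal_mul, h]
    exact coeIdeal_le_one
  exact hle (mul_comm x _ ▸ mul_mem_mul (mem_spanSingleton_self _ x) (mem_coeIdeal_of_mem _ hp))

lemma notMem_inv_of_spanSingleton_mul_eq (hD : D ≠ ⊥)
    (h : spanSingleton A⁰ x * ↑(D * P) = (J : FractionalIdeal A⁰ K)) (hJ : ¬ J ≤ P) :
    x ∉ (D : FractionalIdeal A⁰ K)⁻¹ := by
  intro hx
  apply hJ
  rw [← coeIdeal_le_coeIdeal K, ← h, coeIdeal_mul, ← mul_assoc]
  calc spanSingleton A⁰ x * D * P ≤ (D : FractionalIdeal A⁰ K)⁻¹ * D * P := by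
        gcongr
        exact spanSingleton_le_iff_mem.mpr hx
    _ = P := by rw [inv_mul_cancel₀ (by simpa), one_mul]

end FractionalIdeal

namespace NumberField

variable {K : Type*} [Field K] [NumberField K]

lemma mem_dual_one_iff {x : K} :
    x ∈ FractionalIdeal.dual ℤ ℚ (1 : FractionalIdeal (𝓞 K)⁰ K) ↔
      ∀ a : 𝓞 K, Algebra.trace ℚ K (a * x) ∈ (algebraMap ℤ ℚ).range := by
  rw [FractionalIdeal.mem_dual (one_ne_zero (α := FractionalIdeal (𝓞 K)⁰ K))]
  simp [FractionalIdeal.mem_one_iff, mul_comm x]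

noncomputable def traceAddChar (ω : K) : AddChar (𝓞 K) ℂ where
  toFun a := Complex.exp (2 * Real.pi * Complex.I * (Algebra.trace ℚ K (a * ω) : ℂ))
  map_zero_eq_one' := by simp
  map_add_eq_mul' a b := by simp [add_mul, mul_add, Complex.exp_add]

lemma traceAddChar_apply_eq_one_iff {ω : K} {a : 𝓞 K} :
    traceAddChar ω a = 1 ↔ Algebra.trace ℚ K (a * ω) ∈ (algebraMap ℤ ℚ).range := by
  have h2πI : 2 * Real.pi * Complex.I ≠ 0 := by simp [Real.pi_ne_zero]
  simp only [traceAddChar, AddChar.coe_mk, Complex.exp_eq_one_iff, RingHom.mem_range, eq_intCast]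
  refine exists_congr fun n => ?_
  rw [mul_comm (n : ℂ), mul_right_inj' h2πI, eq_comm]
  norm_cast

lemma traceAddChar_apply_eq_one_of_mem_dual {ω : K} {a : 𝓞 K}
    (h : (a : K) * ω ∈ FractionalIdeal.dual ℤ ℚ (1 : FractionalIdeal (𝓞 K)⁰ K)) :
    traceAddChar ω a = 1 :=
  traceAddChar_apply_eq_one_iff.mpr (by simpa using mem_dual_one_iff.mp h 1)

lemma traceAddChar_eq_one_iff {ω : K} :
    traceAddChar ω = 1 ↔
      ω ∈ FractionalIdeal.dual ℤ ℚ (1 : FractionalIdeal (𝓞 K)⁰ K) := by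
  simp only [AddChar.eq_one_iff, traceAddChar_apply_eq_one_iff, mem_dual_one_iff]

end NumberField

open scoped Classical in
theorem gauss_sum_square_general
    (K : Type*) [Field K] [NumberField K]
    (P : Ideal (RingOfIntegers K)) [P.IsMaximal]
    (hP2 : ¬ P ∣ Ideal.span {(2 : RingOfIntegers K)})
    [Fintype (RingOfIntegers K ⧸ P)]
    (ω : K)
    (hω : ∃ J : Ideal (RingOfIntegers K), ¬ J ≤ P ∧
      (FractionalIdeal.spanSingleton (nonZeroDivisors (RingOfIntegers K)) ω) *
        ((differentIdeal ℤ (RingOfIntegers K) * P : Ideal (RingOfIntegers K)) :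
          FractionalIdeal (nonZeroDivisors (RingOfIntegers K)) K)
      = (J : FractionalIdeal (nonZeroDivisors (RingOfIntegers K)) K))
    (s : (RingOfIntegers K ⧸ P) → RingOfIntegers K)
    (hs : ∀ x, Ideal.Quotient.mk P (s x) = x)
    (e : K → ℂ)
    (he : ∀ α : K, e α = Complex.exp (Real.pi * Complex.I * ((Algebra.trace ℚ K α : ℚ) : ℂ))) :
    (∑ x : RingOfIntegers K ⧸ P, e (2 * ((s x : K)) ^ 2 * ω)) ^ 2
      = (if IsSquare (Ideal.Quotient.mk P (-1 : RingOfIntegers K)) then (1 : ℂ) else -1) *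
        (Fintype.card (RingOfIntegers K ⧸ P) : ℂ) := by
  obtain ⟨J, hJP, hJ⟩ := hω
  let _ : Field (𝓞 K ⧸ P) := Ideal.Quotient.field P
  have hD : differentIdeal ℤ (𝓞 K) ≠ ⊥ := differentIdeal_ne_bot
  have hdual : (differentIdeal ℤ (𝓞 K) : FractionalIdeal (𝓞 K)⁰ K)⁻¹ =
      FractionalIdeal.dual ℤ ℚ 1 := by
    rw [coeIdeal_differentIdeal ℤ ℚ, inv_inv]
  let ψ := (traceAddChar ω).liftQuotient P fun _ hp => traceAddChar_apply_eq_one_of_mem_dual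
    (hdual ▸ FractionalIdeal.mul_mem_inv_of_spanSingleton_mul_eq hD hJ hp)
  have hψ : ψ ≠ 1 := AddChar.liftQuotient_ne_one fun h =>
    FractionalIdeal.notMem_inv_of_spanSingleton_mul_eq hD hJ hJP
      (hdual ▸ traceAddChar_eq_one_iff.mp h)
  have hterm (x : 𝓞 K ⧸ P) : e (2 * (s x : K) ^ 2 * ω) = ψ (x ^ 2) := by
    have hx : x ^ 2 = Ideal.Quotient.mk P (s x ^ 2) := by rw [map_pow, hs]
    rw [hx, AddChar.liftQuotient_mk, he]
    simp only [traceAddChar, AddChar.coe_mk]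
    congr 1
    rw [mul_assoc 2, two_mul, map_add]
    push_cast
    ring
  simp only [hterm, map_neg, map_one]
  exact sq_sum_addChar_sq
    (Ideal.ringChar_quotient_ne_two (mt Ideal.dvd_span_singleton.mpr hP2)) hψ

open scoped Classical in
/-- The square of the quadratic Gauss sum `g = Σ_{x ∈ O/P} e{2x²ω}` at a prime `P ∤ 2`
equals `(−1/P)·N(P)`, where `e{α} = exp(πi Tr_{K/ℚ}(α))` and `ω` generates `∂⁻¹P⁻¹`
locally at `P`. -/
theorem gauss_sum_square
    (K : Type*) [Field K] [NumberField K]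
    (htr : ∀ v : InfinitePlace K, v.IsReal)
    (P : Ideal (RingOfIntegers K)) [P.IsMaximal] (hP0 : P ≠ ⊥)
    (hP2 : ¬ P ∣ Ideal.span {(2 : RingOfIntegers K)})
    [Fintype (RingOfIntegers K ⧸ P)]
    (ω : K)
    (hω : ∃ J : Ideal (RingOfIntegers K), ¬ J ≤ P ∧
      (FractionalIdeal.spanSingleton (nonZeroDivisors (RingOfIntegers K)) ω) *
        ((differentIdeal ℤ (RingOfIntegers K) * P : Ideal (RingOfIntegers K)) :
          FractionalIdeal (nonZeroDivisors (RingOfIntegers K)) K)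
      = (J : FractionalIdeal (nonZeroDivisors (RingOfIntegers K)) K))
    (s : (RingOfIntegers K ⧸ P) → RingOfIntegers K)
    (hs : ∀ x, Ideal.Quotient.mk P (s x) = x)
    (e : K → ℂ)
    (he : ∀ α : K, e α = Complex.exp (Real.pi * Complex.I * ((Algebra.trace ℚ K α : ℚ) : ℂ))) :
    (∑ x : RingOfIntegers K ⧸ P, e (2 * ((s x : K)) ^ 2 * ω)) ^ 2
      = (if IsSquare (Ideal.Quotient.mk P (-1 : RingOfIntegers K)) then (1 : ℂ) else -1) *
        (Fintype.card (RingOfIntegers K ⧸ P) : ℂ) :=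
  gauss_sum_square_general K P hP2 ω hω s hs e he
end

section
/- Let P | 2O be a prime ideal of O, ω ∈ ∂^{-1}P^{-1} with ωO_P = ∂^{-1}P^{-1}O_P, and ε ∈ O such that 1 − 4ε has quadratic defect 4O_P in O_P (equivalently, 1 + y + εy² ∉ P for all y ∈ O). Then Σ_{x,y ∈ O/P} e{2(x² + xy + εy²)ω} = −N(P). -/
/-!
Write `Q(x, y) = x² + xy + εy²` on `F = O/P` and `q = N(P)`. As `F` has characteristic `2`, every
element is a square, so the substitution `v ↦ λ • v` shows that `Σ_v ψ(c Q(v))` does not depend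
on `c ≠ 0`. Summing over all `c` and using orthogonality of a nontrivial additive character `ψ`
gives `(q - 1) Σ_v ψ(Q(v)) = q #{Q = 0} - q²`; the condition on `ε` says that `Q` is anisotropic,
so `#{Q = 0} = 1` and the sum is `-q`. The character is `ψ(a mod P) = e{2aω}`: since `ω∂ ⊆ O`
exactly when `Tr(aω) ∈ ℤ` for all `a ∈ O`, it is well defined because `ωP∂ ⊆ O`, and nontrivial
because `ωP∂ ⊄ P`.
-/

open NumberField Finset nonZeroDivisors

lemma eq_zero_of_sq_add_mul_add_mul_sq_eq_zero {K : Type*} [Field K] {ε : K}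
    (hε : ∀ t, 1 + t + ε * t ^ 2 ≠ 0) {x y : K} (h : x ^ 2 + x * y + ε * y ^ 2 = 0) :
    x = 0 ∧ y = 0 := by
  by_cases hx : x = 0
  · have hε0 : ε ≠ 0 := by simpa using hε (-1)
    subst hx
    simpa [hε0] using h
  · refine absurd ?_ (hε (y / x))
    field_simp
    linear_combination h

namespace FiniteField

variable {F : Type*} [Field F] [Fintype F]

lemma sum_addChar_mul_quadratic_of_ne_zero {V : Type*} [MulAction F V] [Fintype V]
    (hF : ringChar F = 2) (ψ : AddChar F ℂ) {Q : V → F}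
    (hQ : ∀ (c : F) (v : V), Q (c • v) = c ^ 2 * Q v) {c : F} (hc : c ≠ 0) :
    ∑ v, ψ (c * Q v) = ∑ v, ψ (Q v) := by
  obtain ⟨l, rfl⟩ := isSquare_of_char_two hF c
  have hl : l ≠ 0 := by rintro rfl; simp at hc
  calc ∑ v, ψ (l * l * Q v) = ∑ v, ψ (Q ((Units.mk0 l hl) • v)) := by
        simp [Units.smul_def, hQ, sq]
    _ = ∑ v, ψ (Q v) := Equiv.sum_comp (MulAction.toPerm (Units.mk0 l hl)) fun v => ψ (Q v)

theorem card_sub_one_mul_sum_addChar_quadratic [DecidableEq F] {V : Type*} [MulAction F V]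
    [Fintype V] (hF : ringChar F = 2) {ψ : AddChar F ℂ} (hψ : ψ ≠ 1) {Q : V → F}
    (hQ : ∀ (c : F) (v : V), Q (c • v) = c ^ 2 * Q v) :
    ((Fintype.card F : ℂ) - 1) * ∑ v, ψ (Q v) =
      Fintype.card F * #{v | Q v = 0} - Fintype.card V := by
  have orthogonality : ∑ c, ∑ v, ψ (c * Q v) = Fintype.card F * #{v | Q v = 0} := by
    rw [sum_comm]
    simp_rw [AddChar.sum_mulShift _ (AddChar.IsPrimitive.of_ne_one hψ)]
    simp [sum_ite, mul_comm]
  have scaling : ∑ c, ∑ v, ψ (c * Q v) =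
      Fintype.card V + ((Fintype.card F : ℂ) - 1) * ∑ v, ψ (Q v) := by
    rw [← add_sum_erase _ _ (mem_univ 0),
      sum_congr rfl fun c hc => sum_addChar_mul_quadratic_of_ne_zero hF ψ hQ (ne_of_mem_erase hc)]
    simp [card_erase_of_mem, Nat.cast_sub Fintype.card_pos]
  linear_combination scaling.symm.trans orthogonality

theorem sum_addChar_anisotropic_plane (hF : ringChar F = 2) {ψ : AddChar F ℂ} (hψ : ψ ≠ 1)
    {ε : F} (hε : ∀ t, 1 + t + ε * t ^ 2 ≠ 0) :
    ∑ x, ∑ y, ψ (x ^ 2 + x * y + ε * y ^ 2) = -(Fintype.card F : ℂ) := by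
  classical
  let Q : F × F → F := fun p => p.1 ^ 2 + p.1 * p.2 + ε * p.2 ^ 2
  have hQ : ∀ (c : F) (p : F × F), Q (c • p) = c ^ 2 * Q p := fun c p => by
    simp only [Q, Prod.smul_fst, Prod.smul_snd, smul_eq_mul]; ring
  have zeros : #{p | Q p = 0} = 1 := by
    rw [card_eq_one]
    refine ⟨0, eq_singleton_iff_unique_mem.mpr ⟨by simp [Q], fun p hp => ?_⟩⟩
    obtain ⟨h1, h2⟩ := eq_zero_of_sq_add_mul_add_mul_sq_eq_zero hε (mem_filter.mp hp).2
    exact Prod.ext h1 h2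
  have key := card_sub_one_mul_sum_addChar_quadratic hF hψ hQ
  rw [zeros, Fintype.card_prod] at key
  have hq : (Fintype.card F : ℂ) - 1 ≠ 0 := by
    rw [sub_ne_zero]; exact_mod_cast Fintype.one_lt_card.ne'
  rw [← Fintype.sum_prod_type']
  apply mul_left_cancel₀ hq
  push_cast at key
  linear_combination key

end FiniteField

def AddChar.liftIdeal {R M : Type*} [CommRing R] [CommMonoid M] (I : Ideal R)
    (ψ : AddChar R M) (hψ : ∀ a ∈ I, ψ a = 1) : AddChar (R ⧸ I) M :=
  toAddMonoidHomEquiv.symm (QuotientAddGroup.lift I.toAddSubgroup ψ.toAddMonoidHom hψ)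

@[simp]
lemma AddChar.liftIdeal_mk {R M : Type*} [CommRing R] [CommMonoid M] (I : Ideal R)
    (ψ : AddChar R M) (hψ : ∀ a ∈ I, ψ a = 1) (a : R) :
    ψ.liftIdeal I hψ (Ideal.Quotient.mk I a) = ψ a := rfl

lemma AddChar.liftIdeal_ne_one {R M : Type*} [CommRing R] [CommMonoid M] (I : Ideal R)
    {ψ : AddChar R M} (hψ : ∀ a ∈ I, ψ a = 1) (hne : ψ ≠ 1) : ψ.liftIdeal I hψ ≠ 1 := by
  contrapose! hne
  ext a
  rw [← liftIdeal_mk I ψ hψ, hne, one_apply, one_apply]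

namespace NumberField

variable {K : Type*} [Field K] [NumberField K]

section

open Complex
open scoped Real

/-- `traceChar ω a` is `e{2aω}`. -/
noncomputable def traceChar (ω : K) : AddChar (𝓞 K) ℂ where
  toFun a := exp (2 * π * I * (Algebra.trace ℚ K (a * ω) : ℂ))
  map_zero_eq_one' := by simp
  map_add_eq_mul' a b := by simp [add_mul, mul_add, ← Complex.exp_add]

lemma traceChar_apply_eq_one_iff (ω : K) (a : 𝓞 K) :
    traceChar ω a = 1 ↔ Algebra.trace ℚ K (a * ω) ∈ (algebraMap ℤ ℚ).range := by
  have h2πI : 2 * π * I ≠ 0 := by simp [Real.pi_ne_zero, I_ne_zero]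
  change exp _ = 1 ↔ _
  rw [exp_eq_one_iff]
  refine exists_congr fun n => ?_
  rw [mul_comm _ (2 * π * I), mul_right_inj' h2πI, eq_comm, algebraMap_int_eq, eq_intCast]
  exact_mod_cast Iff.rfl

lemma exp_pi_mul_I_trace_two_mul (ω : K) (a : 𝓞 K) :
    exp (π * I * (Algebra.trace ℚ K (2 * a * ω) : ℂ)) = traceChar ω a := by
  rw [show (2 : K) * a * ω = (2 : ℚ) • (a * ω) by rw [Rat.smul_def]; push_cast; ring, map_smul]
  simp only [traceChar, AddChar.coe_mk, smul_eq_mul]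
  push_cast
  ring_nf

end

lemma traceChar_eq_one_iff (ω : K) :
    traceChar ω = 1 ↔ FractionalIdeal.spanSingleton (𝓞 K)⁰ ω *
      (differentIdeal ℤ (𝓞 K) : FractionalIdeal (𝓞 K)⁰ K) ≤ 1 := by
  rw [coeIdeal_differentIdeal ℤ ℚ K, mul_inv_le_iff₀ (by simp [pos_iff_ne_zero]), one_mul,
    FractionalIdeal.spanSingleton_le_iff_mem, FractionalIdeal.mem_dual (by simp),
    AddChar.ext_iff]
  simp only [AddChar.one_apply, traceChar_apply_eq_one_iff, FractionalIdeal.mem_one_iff,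
    forall_exists_index, forall_apply_eq_imp_iff, Algebra.traceForm_apply, mul_comm ω]

lemma traceChar_mul_apply (ω : K) (a b : 𝓞 K) : traceChar (a * ω) b = traceChar ω (b * a) := by
  simp only [traceChar, AddChar.coe_mk, map_mul, mul_assoc]

lemma traceChar_apply_eq_one_of_mem {ω : K} {I : Ideal (𝓞 K)}
    (h : FractionalIdeal.spanSingleton (𝓞 K)⁰ ω *
      ((differentIdeal ℤ (𝓞 K) * I : Ideal (𝓞 K)) : FractionalIdeal (𝓞 K)⁰ K) ≤ 1)
    {a : 𝓞 K} (ha : a ∈ I) : traceChar ω a = 1 := by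
  rw [← one_mul a, ← traceChar_mul_apply, (traceChar_eq_one_iff _).mpr, AddChar.one_apply]
  refine le_trans ?_ h
  rw [← FractionalIdeal.spanSingleton_mul_spanSingleton, FractionalIdeal.coeIdeal_mul, mul_comm,
    ← mul_assoc, mul_comm _ (FractionalIdeal.spanSingleton _ ω)]
  gcongr
  rw [← FractionalIdeal.coeIdeal_span_singleton, FractionalIdeal.coeIdeal_le_coeIdeal]
  exact (Ideal.span_singleton_le_iff_mem I).mpr ha

lemma traceChar_ne_one {ω : K} {I : Ideal (𝓞 K)}
    (h : ¬ FractionalIdeal.spanSingleton (𝓞 K)⁰ ω *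
      ((differentIdeal ℤ (𝓞 K) * I : Ideal (𝓞 K)) : FractionalIdeal (𝓞 K)⁰ K) ≤ I) :
    traceChar ω ≠ 1 := by
  contrapose! h
  rw [FractionalIdeal.coeIdeal_mul, ← mul_assoc]
  exact mul_le_of_le_one_left' ((traceChar_eq_one_iff ω).mp h)

end NumberField

theorem anisotropic_plane_sum_at_two_general
    (K : Type*) [Field K] [NumberField K]
    (P : Ideal (RingOfIntegers K)) [P.IsMaximal]
    (hP2 : P ∣ Ideal.span {(2 : RingOfIntegers K)})
    [Fintype (RingOfIntegers K ⧸ P)]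
    (ω : K)
    (hω : ∃ J : Ideal (RingOfIntegers K), ¬ J ≤ P ∧
      (FractionalIdeal.spanSingleton (nonZeroDivisors (RingOfIntegers K)) ω) *
        ((differentIdeal ℤ (RingOfIntegers K) * P : Ideal (RingOfIntegers K)) :
          FractionalIdeal (nonZeroDivisors (RingOfIntegers K)) K)
      = (J : FractionalIdeal (nonZeroDivisors (RingOfIntegers K)) K))
    (s : (RingOfIntegers K ⧸ P) → RingOfIntegers K)
    (hs : ∀ x, Ideal.Quotient.mk P (s x) = x)
    (e : K → ℂ)
    (he : ∀ α : K, e α = Complex.exp (Real.pi * Complex.I * ((Algebra.trace ℚ K α : ℚ) : ℂ)))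
    (ε : RingOfIntegers K)
    (hε : ∀ y : RingOfIntegers K, 1 + y + ε * y ^ 2 ∉ P) :
    (∑ x : RingOfIntegers K ⧸ P, ∑ y : RingOfIntegers K ⧸ P,
        e (2 * ((s x : K) ^ 2 + (s x : K) * (s y : K) + (ε : K) * (s y : K) ^ 2) * ω))
      = -(Fintype.card (RingOfIntegers K ⧸ P) : ℂ) := by
  let := Ideal.Quotient.field P
  obtain ⟨J, hJP, hJ⟩ := hω
  have hψP : ∀ a ∈ P, traceChar ω a = 1 :=
    fun a => traceChar_apply_eq_one_of_mem (hJ ▸ FractionalIdeal.coeIdeal_le_one)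
  set ψ := (traceChar ω).liftIdeal P hψP
  have hψ : ψ ≠ 1 := AddChar.liftIdeal_ne_one P hψP
    (traceChar_ne_one (by rwa [hJ, FractionalIdeal.coeIdeal_le_coeIdeal]))
  have hchar : ringChar (𝓞 K ⧸ P) = 2 := by
    refine CharP.ringChar_of_prime_eq_zero Nat.prime_two ?_
    exact_mod_cast Ideal.Quotient.eq_zero_iff_mem.mpr
      (Ideal.le_of_dvd hP2 (Ideal.mem_span_singleton_self 2))
  have hε_mod : ∀ t, 1 + t + Ideal.Quotient.mk P ε * t ^ 2 ≠ 0 := fun t h => by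
    apply hε (s t)
    rw [← Ideal.Quotient.eq_zero_iff_mem]
    simpa [hs] using h
  have he_char : ∀ a : 𝓞 K, e (2 * a * ω) = ψ (Ideal.Quotient.mk P a) := fun a => by
    rw [he, exp_pi_mul_I_trace_two_mul, AddChar.liftIdeal_mk]
  calc _ = ∑ x, ∑ y, ψ (x ^ 2 + x * y + Ideal.Quotient.mk P ε * y ^ 2) := by
        refine sum_congr rfl fun x _ => sum_congr rfl fun y _ => ?_
        have := he_char (s x ^ 2 + s x * s y + ε * s y ^ 2)
        push_cast at this
        simpa [hs] using this
    _ = _ := FiniteField.sum_addChar_anisotropic_plane hchar hψ hε_mod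

/-- At a prime `P | 2O`, the anisotropic-plane character sum
`Σ_{x,y ∈ O/P} e{2(x² + xy + εy²)ω}` equals `−N(P)`, where `1 + y + εy² ∉ P` for all `y`
(the quadratic-defect condition on `1 − 4ε`), `e{α} = exp(πi Tr_{K/ℚ}(α))`, and `ω`
generates `∂⁻¹P⁻¹` locally at `P`. -/
theorem anisotropic_plane_sum_at_two
    (K : Type*) [Field K] [NumberField K]
    (htr : ∀ v : InfinitePlace K, v.IsReal)
    (P : Ideal (RingOfIntegers K)) [P.IsMaximal] (hP0 : P ≠ ⊥)
    (hP2 : P ∣ Ideal.span {(2 : RingOfIntegers K)})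
    [Fintype (RingOfIntegers K ⧸ P)]
    (ω : K)
    (hω : ∃ J : Ideal (RingOfIntegers K), ¬ J ≤ P ∧
      (FractionalIdeal.spanSingleton (nonZeroDivisors (RingOfIntegers K)) ω) *
        ((differentIdeal ℤ (RingOfIntegers K) * P : Ideal (RingOfIntegers K)) :
          FractionalIdeal (nonZeroDivisors (RingOfIntegers K)) K)
      = (J : FractionalIdeal (nonZeroDivisors (RingOfIntegers K)) K))
    (s : (RingOfIntegers K ⧸ P) → RingOfIntegers K)
    (hs : ∀ x, Ideal.Quotient.mk P (s x) = x)
    (e : K → ℂ)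
    (he : ∀ α : K, e α = Complex.exp (Real.pi * Complex.I * ((Algebra.trace ℚ K α : ℚ) : ℂ)))
    (ε : RingOfIntegers K)
    (hε : ∀ y : RingOfIntegers K, 1 + y + ε * y ^ 2 ∉ P) :
    (∑ x : RingOfIntegers K ⧸ P, ∑ y : RingOfIntegers K ⧸ P,
        e (2 * ((s x : K) ^ 2 + (s x : K) * (s y : K) + (ε : K) * (s y : K) ^ 2) * ω))
      = -(Fintype.card (RingOfIntegers K ⧸ P) : ℂ) :=
  anisotropic_plane_sum_at_two_general K P hP2 ω hω s hs e he ε hε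
end

section
/- Let F be a finite field of odd cardinality, V ∈ Sym_{n-r}(F) representing a quadratic space Ω₁ of dimension n−r, and let a ≤ j' ≤ n−r. Then for every congruence class of U ∈ Sym_a(F), β(n−r−a, j'−a)·R*(V,U) = Σ_{cls V' ∈ Sym_{j'}(F)} R*(V,V')·R*(V',U), where R*(·,·) counts full-rank representations divided by the order of the isometry group of the represented form, and β is the Gaussian binomial. (Counting flags Λ₁ ⊆ Ω₁' ⊆ Ω₁ with dim Λ₁ = a, dim Ω₁' = j', two ways.) -/
open Matrix

/-- The Gaussian binomial `β(r,a) = Π_{i=0}^{a-1} (q^{r-i} − 1)/(q^{a-i} − 1)`. -/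
noncomputable def gaussBinom (q r a : ℕ) : ℚ :=
  ∏ i ∈ Finset.range a, (((q : ℚ) ^ (r - i) - 1) / ((q : ℚ) ^ (a - i) - 1))

/-- `r*(V,U)`: the number of full-column-rank matrices `C` with `ᵗC V C = U`. -/
noncomputable def rstar {F : Type*} [Field F] [Fintype F] [DecidableEq F] {r a : ℕ}
    (V : Matrix (Fin r) (Fin r) F) (U : Matrix (Fin a) (Fin a) F) : ℕ :=
  Nat.card {C : Matrix (Fin r) (Fin a) F // Cᵀ * V * C = U ∧ C.rank = a}

/-- `R*(V,U) = r*(V,U)/|O(U)|`. -/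
noncomputable def Rstar {F : Type*} [Field F] [Fintype F] [DecidableEq F] {r a : ℕ}
    (V : Matrix (Fin r) (Fin r) F) (U : Matrix (Fin a) (Fin a) F) : ℚ :=
  (rstar V U : ℚ) /
    (Nat.card {G : GL (Fin a) F //
      (G : Matrix (Fin a) (Fin a) F)ᵀ * U * (G : Matrix (Fin a) (Fin a) F) = U} : ℚ)

/-!
Count the pairs `(B, W)` where `B` is a full-rank representation of `U` by `V` and `W ⊇ col B`
is a `j'`-dimensional subspace. For fixed `B`, the `W` are the `(j' - a)`-dimensional subspaces
of `F^(n-r) / col B`, so there are `β(n-r-a, j'-a)` of them. Sorting the pairs instead by the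
class `V' ∈ R` of the Gram matrix of `V` on `W`, the pairs of type `V'` are the images of the
pairs `(C, D)` of representations of `V'` by `V` and of `U` by `V'` under `(C, D) ↦ (C D, col C)`,
and every image is hit `|O(V')|` times.
-/

open Module LinearMap

namespace Matrix

variable {K : Type*} [Field K] {l m n : Type*}

theorem gram_mul [Fintype l] [Fintype m] (V : Matrix l l K) (C : Matrix l m K) (g : Matrix m n K) :
    (C * g)ᵀ * V * (C * g) = gᵀ * (Cᵀ * V * C) * g := by
  simp only [transpose_mul, Matrix.mul_assoc]

theorem rank_eq_iff_injective {k : ℕ} (C : Matrix m (Fin k) K) :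
    C.rank = k ↔ Function.Injective C.mulVecLin := by
  have := finrank_range_add_finrank_ker C.mulVecLin
  rw [finrank_fin_fun] at this
  rw [rank, ← ker_eq_bot, ← Submodule.finrank_eq_zero]
  omega

variable [Fintype m] [Fintype n]

theorem eq_of_mul_eq_mul_of_injective {C : Matrix l m K} {D D' : Matrix m n K}
    (hC : Function.Injective C.mulVecLin) (h : C * D = C * D') : D = D' :=
  ext_iff_mulVec.2 fun v => hC <| by simpa [mulVec_mulVec] using congrArg (· *ᵥ v) h

theorem rank_mul_of_injective {C : Matrix l m K} (D : Matrix m n K)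
    (hC : Function.Injective C.mulVecLin) : (C * D).rank = D.rank := by
  rw [rank, rank, mulVecLin_mul, range_comp]
  exact (Submodule.equivMapOfInjective _ hC _).finrank_eq.symm

theorem exists_mul_eq_of_range_le {C : Matrix l m K} {B : Matrix l n K}
    (h : range B.mulVecLin ≤ range C.mulVecLin) : ∃ D : Matrix m n K, C * D = B := by
  classical
  have hcol : ∀ j, ∃ x, C *ᵥ x = B.col j := fun j => h ⟨Pi.single j 1, mulVec_single_one B j⟩
  choose x hx using hcol
  exact ⟨(of x)ᵀ, ext fun i j => by simpa [mul_apply, mulVec, dotProduct] using congrFun (hx j) i⟩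

theorem range_mulVecLin_mul_GL [DecidableEq m] (C : Matrix l m K) (g : GL m K) :
    range (C * (g : Matrix m m K)).mulVecLin = range C.mulVecLin := by
  rw [mulVecLin_mul, range_comp, range_eq_top.2, Submodule.map_top]
  exact fun y => ⟨(g⁻¹ : GL m K) *ᵥ y, by simp [mulVec_mulVec]⟩

theorem exists_GL_mul_eq_of_range_eq [DecidableEq m] {C C' : Matrix l m K}
    (hC : Function.Injective C.mulVecLin) (h : range C'.mulVecLin = range C.mulVecLin) :
    ∃ g : GL m K, C * (g : Matrix m m K) = C' := by
  obtain ⟨D, hD⟩ := exists_mul_eq_of_range_le h.le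
  obtain ⟨D', hD'⟩ := exists_mul_eq_of_range_le h.ge
  have hDD' : D * D' = 1 := eq_of_mul_eq_mul_of_injective hC <| by
    rw [← Matrix.mul_assoc, hD, hD', Matrix.mul_one]
  exact ⟨⟨D, D', hDD', mul_eq_one_comm.1 hDD'⟩, hD⟩

theorem exists_range_mulVecLin_eq [DecidableEq m] {k : ℕ} (W : Submodule K (m → K))
    (hW : finrank K W = k) : ∃ C : Matrix m (Fin k) K, range C.mulVecLin = W := by
  let e : (Fin k → K) ≃ₗ[K] W := LinearEquiv.ofFinrankEq _ _ (by simp [hW])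
  refine ⟨toMatrix' (W.subtype ∘ₗ e.toLinearMap), ?_⟩
  rw [← toLin'_apply', toLin'_toMatrix', range_comp, LinearEquiv.range, Submodule.map_top,
    Submodule.range_subtype]

end Matrix

theorem Nat.card_eq_sum_card_fiber {α β : Type*} [Finite α] [Fintype β] (f : α → β) :
    Nat.card α = ∑ b, Nat.card {x // f x = b} := by
  rw [← Nat.card_sigma]
  exact Nat.card_congr (Equiv.sigmaFiberEquiv f).symm

theorem Nat.card_eq_card_mul_of_card_fiber {α β : Type*} [Finite α] [Finite β] (f : α → β)
    {k : ℕ} (h : ∀ b, Nat.card {x // f x = b} = k) : Nat.card α = Nat.card β * k := by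
  have := Fintype.ofFinite β
  simp [Nat.card_eq_sum_card_fiber f, h, Nat.card_eq_fintype_card]

theorem Nat.card_eq_sum_card_of_existsUnique {α β : Type*} [Finite α] (s : Finset β)
    (P : α → β → Prop) (h : ∀ x, ∃! b, b ∈ s ∧ P x b) :
    Nat.card α = ∑ b ∈ s, Nat.card {x // P x b} := by
  rw [← Finset.sum_coe_sort, ← Nat.card_sigma]
  refine Nat.card_congr (Equiv.ofBijective (fun p : (b : s) × {x // P x b} => p.2.1)
    ⟨fun p p' hpp' => ?_, fun x => ?_⟩).symm
  · obtain ⟨⟨b, hb⟩, x, hx⟩ := p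
    obtain ⟨⟨b', hb'⟩, x', hx'⟩ := p'
    obtain rfl : x = x' := hpp'
    obtain rfl : b = b' := (h x).unique ⟨hb, hx⟩ ⟨hb', hx'⟩
    rfl
  · obtain ⟨b, hb, hx⟩ := (h x).exists
    exact ⟨⟨⟨b, hb⟩, x, hx⟩, rfl⟩

theorem gaussBinom_mul_prod {q : ℕ} (hq : 1 < q) {n d : ℕ} (hd : d ≤ n) :
    gaussBinom q n d * ∏ i : Fin d, ((q : ℚ) ^ d - q ^ (i : ℕ))
      = ∏ i : Fin d, ((q : ℚ) ^ n - q ^ (i : ℕ)) := by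
  rw [gaussBinom, Fin.prod_univ_eq_prod_range (fun i => (q : ℚ) ^ d - q ^ i),
    Fin.prod_univ_eq_prod_range (fun i => (q : ℚ) ^ n - q ^ i), ← Finset.prod_mul_distrib]
  refine Finset.prod_congr rfl fun i hi => ?_
  have hi := Finset.mem_range.1 hi
  have hne : (q : ℚ) ^ (d - i) - 1 ≠ 0 :=
    sub_ne_zero.2 (one_lt_pow₀ (by exact_mod_cast hq) (by omega)).ne'
  have split {e : ℕ} (he : i ≤ e) : (q : ℚ) ^ e = q ^ i * q ^ (e - i) := by
    rw [← pow_add, Nat.add_sub_cancel' he]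
  rw [split hi.le, split (hi.le.trans hd)]
  field_simp

section Grassmannian

variable {K : Type*} [Field K] {M : Type*} [AddCommGroup M] [Module K M]

theorem finrank_comap_mkQ [FiniteDimensional K M] (Λ : Submodule K M)
    (W' : Submodule K (M ⧸ Λ)) :
    finrank K (W'.comap Λ.mkQ) = finrank K W' + finrank K Λ := by
  have hΛ : Λ ≤ W'.comap Λ.mkQ := fun x hx => by simp [(Submodule.Quotient.mk_eq_zero Λ).2 hx]
  have := LinearMap.finrank_range_add_finrank_ker (Λ.mkQ.domRestrict (W'.comap Λ.mkQ))
  rwa [LinearMap.range_domRestrict, Submodule.map_comap_eq_of_surjective Λ.mkQ_surjective,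
    LinearMap.ker_domRestrict, Submodule.ker_mkQ,
    (Submodule.comapSubtypeEquivOfLe hΛ).finrank_eq, eq_comm] at this

variable [Fintype K] [Finite M]

theorem card_submodule_finrank_mul {d : ℕ} (hd : d ≤ finrank K M) :
    Nat.card {W : Submodule K M // finrank K W = d} *
        ∏ i : Fin d, (Fintype.card K ^ d - Fintype.card K ^ (i : ℕ))
      = ∏ i : Fin d, (Fintype.card K ^ finrank K M - Fintype.card K ^ (i : ℕ)) := by
  rw [← card_linearIndependent hd]
  refine (Nat.card_eq_card_mul_of_card_fiber
    (fun s : {s : Fin d → M // LinearIndependent K s} =>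
      (⟨Submodule.span K (Set.range s.1), by simpa using finrank_span_eq_card s.2⟩ :
        {W : Submodule K M // finrank K W = d})) fun ⟨W, hW⟩ => ?_).symm
  have hbases := card_linearIndependent (K := K) (V := W) hW.ge
  rw [hW] at hbases
  rw [← hbases]
  have span_eq (t : {t : Fin d → W // LinearIndependent K t}) :
      Submodule.span K (Set.range (W.subtype ∘ t.1)) = W := by
    rw [Set.range_comp, ← Submodule.map_span,
      t.2.span_eq_top_of_card_eq_finrank' (by simp [hW]), Submodule.map_top,
      Submodule.range_subtype]
  refine (Nat.card_congr (Equiv.ofBijective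
    (fun t => ⟨⟨W.subtype ∘ t.1, t.2.map' W.subtype W.ker_subtype⟩, Subtype.ext (span_eq t)⟩)
    ⟨fun t t' htt' => ?_, fun ⟨⟨s, hs⟩, hsW⟩ => ?_⟩)).symm
  · exact Subtype.ext (funext fun i => Subtype.ext (congrFun (congrArg (·.1.1) htt') i))
  · have hsW : Submodule.span K (Set.range s) = W := congrArg Subtype.val hsW
    have hmem (i) : s i ∈ W := hsW ▸ Submodule.subset_span (Set.mem_range_self i)
    exact ⟨⟨fun i => ⟨s i, hmem i⟩, hs.of_comp W.subtype⟩, rfl⟩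

theorem card_submodule_finrank_eq_gaussBinom {d : ℕ} (hd : d ≤ finrank K M) :
    (Nat.card {W : Submodule K M // finrank K W = d} : ℚ)
      = gaussBinom (Fintype.card K) (finrank K M) d := by
  have hq : 1 < Fintype.card K := Fintype.one_lt_card
  have cast_prod {n : ℕ} (hn : d ≤ n) :
      ((∏ i : Fin d, (Fintype.card K ^ n - Fintype.card K ^ (i : ℕ)) : ℕ) : ℚ)
        = ∏ i : Fin d, ((Fintype.card K : ℚ) ^ n - Fintype.card K ^ (i : ℕ)) := by
    push_cast [Nat.cast_prod]
    refine Finset.prod_congr rfl fun i _ => ?_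
    rw [Nat.cast_sub (Nat.pow_le_pow_right hq.le (i.2.le.trans hn))]
    push_cast; rfl
  have hprod : ∏ i : Fin d, ((Fintype.card K : ℚ) ^ d - Fintype.card K ^ (i : ℕ)) ≠ 0 :=
    Finset.prod_ne_zero_iff.2 fun i _ =>
      sub_ne_zero.2 (pow_lt_pow_right₀ (by exact_mod_cast hq) i.2).ne'
  refine mul_right_cancel₀ hprod ?_
  rw [gaussBinom_mul_prod hq hd, ← cast_prod le_rfl, ← cast_prod hd, ← Nat.cast_mul,
    card_submodule_finrank_mul hd]

theorem card_submodule_finrank_of_le_eq_gaussBinom (Λ : Submodule K M) {k : ℕ}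
    (hΛk : finrank K Λ ≤ k) (hk : k ≤ finrank K M) :
    (Nat.card {W : Submodule K M // Λ ≤ W ∧ finrank K W = k} : ℚ)
      = gaussBinom (Fintype.card K) (finrank K M - finrank K Λ) (k - finrank K Λ) := by
  have hquot : finrank K (M ⧸ Λ) = finrank K M - finrank K Λ := by
    have := Submodule.finrank_quotient_add_finrank Λ; omega
  have : Finite (M ⧸ Λ) := Finite.of_surjective _ Λ.mkQ_surjective
  rw [← hquot, ← card_submodule_finrank_eq_gaussBinom (by omega),
    ← Nat.card_congr (Equiv.subtypeSubtypeEquivSubtypeInter (Λ ≤ ·) (finrank K · = k))]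
  refine congrArg _ (Nat.card_congr ((Submodule.comapMkQRelIso Λ).toEquiv.subtypeEquiv
    fun W' => ?_)).symm
  show _ ↔ finrank K (W'.comap Λ.mkQ) = k
  rw [finrank_comap_mkQ]
  omega

end Grassmannian

section Representations

variable {F : Type*} [Field F] {m k a : ℕ}

abbrev FullRep (V : Matrix (Fin m) (Fin m) F) (U : Matrix (Fin a) (Fin a) F) : Type _ :=
  {C : Matrix (Fin m) (Fin a) F // Cᵀ * V * C = U ∧ C.rank = a}

abbrev Isometries (U : Matrix (Fin a) (Fin a) F) : Type _ :=
  {G : GL (Fin a) F // (G : Matrix (Fin a) (Fin a) F)ᵀ * U * G = U}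

/-- The flags `Λ₁ ⊆ Ω₁'` of the paper, with `Λ₁ = col B` for a representation `B` of `U`. -/
abbrev RepFlag (V : Matrix (Fin m) (Fin m) F) (U : Matrix (Fin a) (Fin a) F) (k : ℕ) : Type _ :=
  {p : FullRep V U × Submodule F (Fin m → F) // range p.1.1.mulVecLin ≤ p.2 ∧ finrank F p.2 = k}

def IsCongruenceTransversal (R : Finset (Matrix (Fin k) (Fin k) F)) : Prop :=
  ∀ W : Matrix (Fin k) (Fin k) F, Wᵀ = W →
    ∃! V', V' ∈ R ∧ ∃ G : GL (Fin k) F, (G : Matrix (Fin k) (Fin k) F)ᵀ * W * G = V'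

def IsGramOn (V : Matrix (Fin m) (Fin m) F) (W : Submodule F (Fin m → F))
    (V' : Matrix (Fin k) (Fin k) F) : Prop :=
  ∃ C : Matrix (Fin m) (Fin k) F, range C.mulVecLin = W ∧ Cᵀ * V * C = V'

variable {V : Matrix (Fin m) (Fin m) F} {V' : Matrix (Fin k) (Fin k) F}
  {U : Matrix (Fin a) (Fin a) F}

theorem FullRep.injective (C : FullRep V V') : Function.Injective C.1.mulVecLin :=
  (Matrix.rank_eq_iff_injective _).1 C.2.2

def FullRep.comp (C : FullRep V V') (D : FullRep V' U) : FullRep V U :=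
  ⟨C.1 * D.1, by rw [Matrix.gram_mul, C.2.1, D.2.1],
    by rw [Matrix.rank_mul_of_injective _ C.injective, D.2.2]⟩

theorem FullRep.exists_comp_eq (C : FullRep V V') (B : FullRep V U)
    (h : range B.1.mulVecLin ≤ range C.1.mulVecLin) : ∃ D : FullRep V' U, (C.comp D).1 = B.1 := by
  obtain ⟨D, hD⟩ := Matrix.exists_mul_eq_of_range_le h
  refine ⟨⟨D, ?_, ?_⟩, hD⟩
  · rw [← C.2.1, ← Matrix.gram_mul, hD, B.2.1]
  · rw [← Matrix.rank_mul_of_injective _ C.injective, hD, B.2.2]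

theorem Isometries.card_pos [Finite F] : 0 < Nat.card (Isometries U) :=
  have : Nonempty (Isometries U) := ⟨⟨1, by simp⟩⟩
  Nat.card_pos

-- The bases of `W` with Gram matrix `V'` form an `O(V')`-torsor.
theorem card_gram_basis_eq_card_isometries {W : Submodule F (Fin m → F)}
    {C₀ : Matrix (Fin m) (Fin k) F} (hC₀ : Function.Injective C₀.mulVecLin)
    (hC₀W : range C₀.mulVecLin = W) (hC₀V : C₀ᵀ * V * C₀ = V') :
    Nat.card {C : Matrix (Fin m) (Fin k) F // range C.mulVecLin = W ∧ Cᵀ * V * C = V'}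
      = Nat.card (Isometries V') := by
  refine (Nat.card_congr (Equiv.ofBijective (fun G : Isometries V' =>
    ⟨C₀ * (G.1 : Matrix (Fin k) (Fin k) F), (Matrix.range_mulVecLin_mul_GL C₀ G.1).trans hC₀W,
      by rw [Matrix.gram_mul, hC₀V, G.2]⟩)
    ⟨fun G G' hGG' => ?_, fun ⟨C, hCrange, hCV⟩ => ?_⟩)).symm
  · exact Subtype.ext (Units.ext (Matrix.eq_of_mul_eq_mul_of_injective hC₀
      (congrArg Subtype.val hGG')))
  · obtain ⟨g, rfl⟩ := Matrix.exists_GL_mul_eq_of_range_eq hC₀ (hCrange.trans hC₀W.symm)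
    exact ⟨⟨g, by rwa [Matrix.gram_mul, hC₀V] at hCV⟩, rfl⟩

def FullRep.flag (C : FullRep V V') (D : FullRep V' U) :
    {f : RepFlag V U k // IsGramOn V f.1.2 V'} :=
  ⟨⟨(C.comp D, range C.1.mulVecLin),
    by rw [FullRep.comp, Matrix.mulVecLin_mul]; exact range_comp_le_range _ _,
    (Matrix.rank_eq_iff_injective _).2 C.injective⟩, C.1, rfl, C.2.1⟩

theorem card_fullRep_mul_card_fullRep [Finite F] :
    Nat.card (FullRep V V') * Nat.card (FullRep V' U)
      = Nat.card (Isometries V') * Nat.card {f : RepFlag V U k // IsGramOn V f.1.2 V'} := by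
  rw [← Nat.card_prod, mul_comm]
  refine Nat.card_eq_card_mul_of_card_fiber (fun x : FullRep V V' × FullRep V' U =>
    x.1.flag x.2) fun f => ?_
  obtain ⟨⟨⟨B, W⟩, hBW, hW⟩, C₀, hC₀W, hC₀V⟩ := f
  have hC₀ : Function.Injective C₀.mulVecLin :=
    (Matrix.rank_eq_iff_injective _).1 (by rw [Matrix.rank, hC₀W]; exact hW)
  rw [← card_gram_basis_eq_card_isometries hC₀ hC₀W hC₀V]
  refine Nat.card_congr (Equiv.ofBijective (fun x => ⟨x.1.1.1,
    congrArg (fun f => f.1.1.2) x.2, x.1.1.2.1⟩) ⟨fun x y hxy => ?_, fun ⟨C, hCr, hCV⟩ => ?_⟩)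
  · obtain ⟨⟨C, D⟩, hx⟩ := x
    obtain ⟨⟨C', D'⟩, hy⟩ := y
    obtain rfl : C = C' := Subtype.ext (congrArg (fun x => x.1) hxy)
    have hB : C.1 * D.1 = C.1 * D'.1 :=
      (congrArg (fun f => f.1.1.1.1) hx).trans (congrArg (fun f => f.1.1.1.1) hy).symm
    obtain rfl : D = D' := Subtype.ext (Matrix.eq_of_mul_eq_mul_of_injective C.injective hB)
    rfl
  · have hCrank : C.rank = k := by rw [Matrix.rank, hCr]; exact hW
    obtain ⟨D, hD⟩ := FullRep.exists_comp_eq ⟨C, hCV, hCrank⟩ B (hCr ▸ hBW)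
    exact ⟨⟨(⟨C, hCV, hCrank⟩, D), Subtype.ext (Subtype.ext (Prod.ext (Subtype.ext hD) hCr))⟩, rfl⟩

theorem existsUnique_isGramOn (hV : Vᵀ = V) {R : Finset (Matrix (Fin k) (Fin k) F)}
    (hR : IsCongruenceTransversal R) {W : Submodule F (Fin m → F)} (hW : finrank F W = k) :
    ∃! V', V' ∈ R ∧ IsGramOn V W V' := by
  obtain ⟨C₀, hC₀W⟩ := Matrix.exists_range_mulVecLin_eq W hW
  have hC₀ : Function.Injective C₀.mulVecLin :=
    (Matrix.rank_eq_iff_injective _).1 (by rw [Matrix.rank, hC₀W]; exact hW)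
  have hsymm : (C₀ᵀ * V * C₀)ᵀ = C₀ᵀ * V * C₀ := by
    rw [Matrix.transpose_mul, Matrix.transpose_mul, Matrix.transpose_transpose, hV,
      Matrix.mul_assoc]
  obtain ⟨V₀, ⟨hV₀R, g, hg⟩, huniq⟩ := hR _ hsymm
  refine ⟨V₀, ⟨hV₀R, C₀ * (g : Matrix (Fin k) (Fin k) F),
    (Matrix.range_mulVecLin_mul_GL C₀ g).trans hC₀W, by rw [Matrix.gram_mul, hg]⟩, ?_⟩
  rintro V'' ⟨hV''R, C, hCW, hCV⟩
  obtain ⟨g', rfl⟩ := Matrix.exists_GL_mul_eq_of_range_eq hC₀ (hCW.trans hC₀W.symm)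
  exact huniq V'' ⟨hV''R, g', by rwa [Matrix.gram_mul] at hCV⟩

theorem card_repFlag_eq_sum [Finite F] (hV : Vᵀ = V) {R : Finset (Matrix (Fin k) (Fin k) F)}
    (hR : IsCongruenceTransversal R) :
    Nat.card (RepFlag V U k) = ∑ V' ∈ R, Nat.card {f : RepFlag V U k // IsGramOn V f.1.2 V'} :=
  Nat.card_eq_sum_card_of_existsUnique R _ fun f => existsUnique_isGramOn hV hR f.2.2

def RepFlag.fiberEquiv (B : FullRep V U) :
    {f : RepFlag V U k // f.1.1 = B}
      ≃ {W : Submodule F (Fin m → F) // range B.1.mulVecLin ≤ W ∧ finrank F W = k} where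
  toFun f := ⟨f.1.1.2, by obtain ⟨⟨_, h⟩, rfl⟩ := f; exact h⟩
  invFun W := ⟨⟨(B, W.1), W.2⟩, rfl⟩
  left_inv := by rintro ⟨⟨⟨B, W⟩, h⟩, rfl⟩; rfl
  right_inv _ := rfl

theorem card_repFlag [Fintype F] (hak : a ≤ k) (hkm : k ≤ m) :
    (Nat.card (RepFlag V U k) : ℚ)
      = Nat.card (FullRep V U) * gaussBinom (Fintype.card F) (m - a) (k - a) := by
  have := Fintype.ofFinite (FullRep V U)
  rw [Nat.card_eq_sum_card_fiber (fun f : RepFlag V U k => f.1.1), Nat.cast_sum,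
    Nat.card_eq_fintype_card, ← nsmul_eq_mul, ← Finset.card_univ, ← Finset.sum_const]
  refine Finset.sum_congr rfl fun B _ => ?_
  have hB : finrank F (range B.1.mulVecLin) = a := B.2.2
  rw [Nat.card_congr (RepFlag.fiberEquiv B),
    card_submodule_finrank_of_le_eq_gaussBinom _ (hB.le.trans hak) (by rwa [finrank_fin_fun]),
    hB, finrank_fin_fun]

end Representations

theorem flag_counting_identity_general
    (F : Type*) [Field F] [Fintype F] [DecidableEq F]
    (n r a j' : ℕ) (haj : a ≤ j') (hj : j' ≤ n - r)
    (V : Matrix (Fin (n - r)) (Fin (n - r)) F) (hV : Vᵀ = V)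
    (U : Matrix (Fin a) (Fin a) F)
    (R : Finset (Matrix (Fin j') (Fin j') F))
    (hR : ∀ W : Matrix (Fin j') (Fin j') F, Wᵀ = W →
      ∃! V', V' ∈ R ∧ ∃ G : GL (Fin j') F,
        (G : Matrix (Fin j') (Fin j') F)ᵀ * W * (G : Matrix (Fin j') (Fin j') F) = V') :
    gaussBinom (Fintype.card F) (n - r - a) (j' - a) * Rstar V U
      = ∑ V' ∈ R, Rstar V V' * Rstar V' U := by
  calc gaussBinom (Fintype.card F) (n - r - a) (j' - a) * Rstar V U
      = Nat.card (RepFlag V U j') / Nat.card (Isometries U) := by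
        rw [card_repFlag haj hj, Rstar, rstar]
        ring
    _ = ∑ V' ∈ R, (Nat.card {f : RepFlag V U j' // IsGramOn V f.1.2 V'} : ℚ)
          / Nat.card (Isometries U) := by
        rw [card_repFlag_eq_sum hV hR, Nat.cast_sum, Finset.sum_div]
    _ = ∑ V' ∈ R, Rstar V V' * Rstar V' U := Finset.sum_congr rfl fun V' _ => by
        rw [Rstar, Rstar, rstar, rstar, div_mul_div_comm, ← Nat.cast_mul,
          card_fullRep_mul_card_fullRep, Nat.cast_mul,
          mul_div_mul_left _ _ (Nat.cast_ne_zero.2 Isometries.card_pos.ne')]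

/-- Flag-counting identity: `β(n−r−a, j'−a)·R*(V,U) = Σ_{cls V'} R*(V,V')·R*(V',U)`,
obtained by counting flags `Λ₁ ⊆ Ω₁' ⊆ Ω₁` with `dim Λ₁ = a`, `dim Ω₁' = j'` two ways. -/
theorem flag_counting_identity
    (F : Type*) [Field F] [Fintype F] [DecidableEq F] (hq : Odd (Fintype.card F))
    (n r a j' : ℕ) (haj : a ≤ j') (hj : j' ≤ n - r)
    (V : Matrix (Fin (n - r)) (Fin (n - r)) F) (hV : Vᵀ = V)
    (U : Matrix (Fin a) (Fin a) F) (hU : Uᵀ = U)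
    (R : Finset (Matrix (Fin j') (Fin j') F))
    (hRsymm : ∀ W ∈ R, Wᵀ = W)
    (hR : ∀ W : Matrix (Fin j') (Fin j') F, Wᵀ = W →
      ∃! V', V' ∈ R ∧ ∃ G : GL (Fin j') F,
        (G : Matrix (Fin j') (Fin j') F)ᵀ * W * (G : Matrix (Fin j') (Fin j') F) = V') :
    gaussBinom (Fintype.card F) (n - r - a) (j' - a) * Rstar V U
      = ∑ V' ∈ R, Rstar V V' * Rstar V' U :=
  flag_counting_identity_general F n r a j' haj hj V hV U R hR
end

section
/- Let F be a field, and suppose C, D ∈ F^{n×n} satisfy: CᵗD is symmetric, and the n×2n matrix (C D) has rank n. Then there exist G ∈ GL_n(O) (for F the fraction field of O, one can take G ∈ GL_n(O)) and W ∈ O^{n×n} such that with (A' B'; C' D') = (A B; C D)·(ᵗG^{-1} W; 0 G) for any completion (A B; C D) to a symplectic matrix, one has det D' = det(CW + DG) ≠ 0. In particular, every symplectic matrix over O can be modified on the right by an element of the integral Siegel parabolic {(ᵗG^{-1} W; 0 G)} so that its lower-right n×n block is invertible. -/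
/-!
Over the field `F`, bring `C` to the rank normal form `V C U = (1 0; 0 0)` and replace `D` by
`V D U⁻ᵀ`; this keeps `C Dᵀ` symmetric and `(C D)` of full rank. Symmetry then forces
`D = (D₁₁ D₁₂; 0 D₂₂)` with `D₁₁` symmetric, full rank makes `D₂₂` invertible, and
`S = (1 - D₁₁) ⊕ 0` is a symmetric matrix with `det (C S + D) = det D₂₂ ≠ 0`.

To make `S` integral, write `b S = S₀` with `S₀` over `O` and `b ≠ 0`. The polynomial
`t ↦ det (t C S + D)` does not vanish at `t = 1`, so it has finitely many roots, and some
`t = c b` with `c ∈ O` avoids them (if `O` is finite it is a field and `c = b⁻¹` works).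
Then `G = 1`, `W = c S₀` do the job.
-/

open Matrix Polynomial

section CommRing

variable {R : Type*} [CommRing R] {ι κ : Type*} [Fintype ι] [Fintype κ]

/-- The rows of `(C D)` span a Lagrangian subspace of `R²ⁿ` for the standard symplectic form. -/
def Matrix.IsLagrangianPair (C D : Matrix ι ι R) : Prop :=
  (C * Dᵀ).IsSymm ∧ ∀ x : ι → R, x ᵥ* C = 0 → x ᵥ* D = 0 → x = 0

namespace Matrix.IsLagrangianPair

variable {C D : Matrix ι ι R}

theorem mul_mul [DecidableEq ι] (h : IsLagrangianPair C D) {V U W : Matrix ι ι R}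
    (hV : IsUnit V) (hUW : U * Wᵀ = 1) : IsLagrangianPair (V * C * U) (V * D * W) := by
  have hWU : W * Uᵀ = 1 := by simpa using congrArg transpose hUW
  refine ⟨?_, fun x hxC hxD => ?_⟩
  · have : V * C * U * (V * D * W)ᵀ = V * (C * Dᵀ) * Vᵀ := by
      simp only [transpose_mul, Matrix.mul_assoc]
      rw [← Matrix.mul_assoc U, hUW, Matrix.one_mul]
    rw [IsSymm, this, transpose_mul, transpose_mul, transpose_transpose, h.1.eq]
    simp only [Matrix.mul_assoc]
  · have hxVC : (x ᵥ* V) ᵥ* C = 0 := by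
      simpa [vecMul_vecMul, Matrix.mul_assoc, hUW] using congrArg (· ᵥ* Wᵀ) hxC
    have hxVD : (x ᵥ* V) ᵥ* D = 0 := by
      simpa [vecMul_vecMul, Matrix.mul_assoc, hWU] using congrArg (· ᵥ* Uᵀ) hxD
    exact vecMul_injective_of_isUnit hV ((h.2 _ hxVC hxVD).trans (zero_vecMul V).symm)

theorem submatrix (h : IsLagrangianPair C D) (e : κ ≃ ι) :
    IsLagrangianPair (C.submatrix e e) (D.submatrix e e) := by
  refine ⟨?_, fun x hxC hxD => ?_⟩
  · rw [transpose_submatrix, submatrix_mul_equiv]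
    exact h.1.submatrix e
  · rw [submatrix_vecMul_equiv] at hxC hxD
    have hx : x ∘ e.symm = 0 := h.2 _
      (funext fun i => by simpa using congrFun hxC (e.symm i))
      (funext fun i => by simpa using congrFun hxD (e.symm i))
    exact funext fun i => by simpa using congrFun hx (e i)

end Matrix.IsLagrangianPair

namespace Matrix

theorem exists_isSymm_det_mul_add_ne_zero_of_mul_mul [DecidableEq ι]
    {C D V U W : Matrix ι ι R} (hUW : U * Wᵀ = 1)
    (h : ∃ S, S.IsSymm ∧ (V * C * U * S + V * D * W).det ≠ 0) :
    ∃ S, S.IsSymm ∧ (C * S + D).det ≠ 0 := by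
  obtain ⟨S, hS, hdet⟩ := h
  have hUtW : Uᵀ * W = 1 := by
    rw [← transpose_transpose W, ← transpose_mul, mul_eq_one_comm.mp hUW, transpose_one]
  refine ⟨U * S * Uᵀ, by simp [IsSymm, transpose_mul, hS.eq, Matrix.mul_assoc],
    fun h0 => hdet ?_⟩
  have : V * C * U * S + V * D * W = V * (C * (U * S * Uᵀ) + D) * W := by
    simp only [Matrix.mul_add, Matrix.add_mul, Matrix.mul_assoc, hUtW, Matrix.mul_one]
  rw [this, det_mul, det_mul, h0, mul_zero, zero_mul]

theorem exists_isSymm_det_mul_add_ne_zero_of_submatrix [DecidableEq ι] [DecidableEq κ]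
    {C D : Matrix ι ι R} (e : κ ≃ ι)
    (h : ∃ S, S.IsSymm ∧ (C.submatrix e e * S + D.submatrix e e).det ≠ 0) :
    ∃ S, S.IsSymm ∧ (C * S + D).det ≠ 0 := by
  obtain ⟨S, hS, hdet⟩ := h
  refine ⟨S.submatrix e.symm e.symm, hS.submatrix _, ?_⟩
  have : (C * S.submatrix e.symm e.symm + D).submatrix e e =
      C.submatrix e e * S + D.submatrix e e := by
    rw [submatrix_add, Pi.add_apply, Pi.add_apply, ← submatrix_mul_equiv _ _ _ e,
      submatrix_submatrix, e.symm_comp_self, submatrix_id_id]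
  rwa [← det_submatrix_equiv_self e, this]

end Matrix

end CommRing

section Field

variable {K : Type*} [Field K] {ι : Type*} [Fintype ι]

namespace Matrix

theorem isLagrangianPair_of_rank_fromCols {C D : Matrix ι ι K} (hsymm : (C * Dᵀ).IsSymm)
    (hrank : (fromCols C D).rank = Fintype.card ι) : IsLagrangianPair C D := by
  have hinj := vecMul_injective_iff.mpr (linearIndependent_iff_card_eq_finrank_span.mpr
    (hrank.symm.trans (rank_eq_finrank_span_row _)))
  refine ⟨hsymm, fun x hxC hxD => hinj ?_⟩
  simp [vecMul_fromCols, hxC, hxD]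

theorem IsLagrangianPair.exists_isSymm_det_fromBlocks_mul_add_ne_zero {α β : Type*}
    [Fintype α] [DecidableEq α] [Fintype β] [DecidableEq β] {D : Matrix (α ⊕ β) (α ⊕ β) K}
    (h : IsLagrangianPair (fromBlocks 1 0 0 0) D) :
    ∃ S, S.IsSymm ∧ (fromBlocks 1 0 0 0 * S + D).det ≠ 0 := by
  obtain ⟨D₁₁, D₁₂, D₂₁, D₂₂, rfl⟩ : ∃ D₁₁ D₁₂ D₂₁ D₂₂, D = fromBlocks D₁₁ D₁₂ D₂₁ D₂₂ :=
    ⟨_, _, _, _, (fromBlocks_toBlocks D).symm⟩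
  obtain ⟨hsymm, hker⟩ := h
  simp only [fromBlocks_transpose, fromBlocks_multiply, Matrix.one_mul, Matrix.zero_mul,
    add_zero, Matrix.transpose_zero, isSymm_fromBlocks_iff, transpose_transpose] at hsymm
  obtain ⟨hD₁₁, rfl, -, -⟩ := hsymm
  have hD₂₂ : IsUnit D₂₂.det := by
    rw [← isUnit_iff_isUnit_det, ← vecMul_injective_iff_isUnit, ← coe_vecMulLinear,
      injective_iff_map_eq_zero]
    intro y (hy : y ᵥ* D₂₂ = 0)
    have := hker (Sum.elim 0 y) (by simp [vecMul_fromBlocks]) (by simp [vecMul_fromBlocks, hy])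
    simpa using congrArg (· ∘ Sum.inr) this
  refine ⟨fromBlocks (1 - D₁₁) 0 0 0, ?_, ?_⟩
  · exact isSymm_fromBlocks_iff.mpr
      ⟨isSymm_one.sub (by simpa using hD₁₁.transpose), by simp, by simp, isSymm_zero⟩
  · simpa [fromBlocks_multiply, fromBlocks_add] using hD₂₂.ne_zero

theorem IsLagrangianPair.exists_isSymm_det_mul_add_ne_zero [DecidableEq ι]
    {C D : Matrix ι ι K} (h : IsLagrangianPair C D) :
    ∃ S, S.IsSymm ∧ (C * S + D).det ≠ 0 := by
  obtain ⟨V, U, e, hV, hU, hVCU⟩ := exists_rank_normal_form C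
  have hUU : U * U⁻¹ᵀᵀ = 1 := by
    rw [transpose_transpose, mul_nonsing_inv _ ((isUnit_iff_isUnit_det U).mp hU)]
  have h' := (h.mul_mul hV hUU).submatrix e.symm
  rw [hVCU, submatrix_submatrix, e.self_comp_symm, submatrix_id_id] at h'
  refine exists_isSymm_det_mul_add_ne_zero_of_mul_mul (V := V) hUU
    (exists_isSymm_det_mul_add_ne_zero_of_submatrix e.symm ?_)
  rw [hVCU, submatrix_submatrix, e.self_comp_symm, submatrix_id_id]
  exact h'.exists_isSymm_det_fromBlocks_mul_add_ne_zero

theorem finite_setOf_det_smul_add_eq_zero [DecidableEq ι] {A B : Matrix ι ι K}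
    (h : (A + B).det ≠ 0) : {t : K | (t • A + B).det = 0}.Finite := by
  set p : K[X] := det ((X : K[X]) • A.map C + B.map C)
  have heval (t : K) : p.eval t = (t • A + B).det := by
    rw [← coe_evalRingHom, RingHom.map_det]
    congr 1
    ext i j
    simp [smul_eq_mul, mul_comm (A i j) t]
  have hp : p ≠ 0 := fun hp => h (by simpa [hp] using (heval 1).symm)
  simpa [heval] using finite_setOfPred_isRoot hp

end Matrix

end Field

theorem exists_algebraMap_mul_notMem {O F : Type*} [CommRing O] [CommRing F] [Algebra O F]
    [FaithfulSMul O F] {s : Set F} (hs : s.Finite) (h1 : (1 : F) ∉ s) {b : O}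
    (hb : b ∈ nonZeroDivisors O) : ∃ c : O, algebraMap O F (c * b) ∉ s := by
  cases finite_or_infinite O
  · obtain ⟨u, rfl⟩ := IsArtinianRing.isUnit_of_mem_nonZeroDivisors hb
    exact ⟨↑u⁻¹, by simpa using h1⟩
  · have hinj : Function.Injective fun c : O => algebraMap O F (c * b) :=
      (FaithfulSMul.algebraMap_injective O F).comp
        fun _ _ => (mul_cancel_right_mem_nonZeroDivisors hb).mp
    exact (hs.preimage hinj.injOn).infinite_compl.nonempty

section FractionRing

variable {O F : Type*} [CommRing O] [Field F] [Algebra O F] [IsFractionRing O F]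
  {ι : Type*}

namespace Matrix

theorem exists_isSymm_map_algebraMap_eq_smul [Finite ι] {S : Matrix ι ι F} (hS : S.IsSymm) :
    ∃ b ∈ nonZeroDivisors O, ∃ S₀ : Matrix ι ι O,
      S₀.IsSymm ∧ S₀.map (algebraMap O F) = algebraMap O F b • S := by
  obtain ⟨b, hb⟩ := IsLocalization.exist_integer_multiples_of_finite (nonZeroDivisors O)
    fun p : ι × ι => S p.1 p.2
  choose S₀ hS₀ using fun i j => hb (i, j)
  have hmap : (of S₀).map (algebraMap O F) = algebraMap O F b • S := by
    ext i j
    simpa [Algebra.smul_def] using hS₀ i j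
  refine ⟨b, b.2, of S₀, map_injective (FaithfulSMul.algebraMap_injective O F) ?_, hmap⟩
  dsimp only
  rw [transpose_map, hmap, transpose_smul, hS.eq]

theorem exists_isSymm_det_mul_map_algebraMap_add_ne_zero [Fintype ι] [DecidableEq ι]
    {C D S : Matrix ι ι F} (hS : S.IsSymm) (hdet : (C * S + D).det ≠ 0) :
    ∃ W : Matrix ι ι O, W.IsSymm ∧ (C * W.map (algebraMap O F) + D).det ≠ 0 := by
  obtain ⟨b, hb, S₀, hS₀, hmap⟩ := exists_isSymm_map_algebraMap_eq_smul (O := O) hS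
  obtain ⟨c, hc⟩ := exists_algebraMap_mul_notMem
    (finite_setOf_det_smul_add_eq_zero (A := C * S) (B := D) hdet) (by simpa using hdet) hb
  refine ⟨c • S₀, hS₀.smul c, ?_⟩
  have : (c • S₀).map (algebraMap O F) = algebraMap O F (c * b) • S := by
    ext i j
    have hij := congrFun₂ hmap i j
    simp only [map_apply, Matrix.smul_apply, smul_eq_mul] at hij ⊢
    rw [map_mul, map_mul, hij, mul_assoc]
  rwa [this, Matrix.mul_smul]

end Matrix

end FractionRing

theorem exists_parabolic_making_lower_right_invertible_general
    (O : Type*) [CommRing O]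
    (F : Type*) [Field F] [Algebra O F] [IsFractionRing O F]
    (n : ℕ) (C D : Matrix (Fin n) (Fin n) F)
    (h1 : (C * Dᵀ).IsSymm)
    (h2 : (Matrix.of fun (i : Fin n) (j : Fin n ⊕ Fin n) => Sum.elim (C i) (D i) j).rank = n) :
    ∃ (G W : Matrix (Fin n) (Fin n) O),
      IsUnit G.det ∧ (W * Gᵀ).IsSymm ∧
        (C * W.map (algebraMap O F) + D * G.map (algebraMap O F)).det ≠ 0 := by
  have hL : C.IsLagrangianPair D :=
    isLagrangianPair_of_rank_fromCols h1 (h2.trans (Fintype.card_fin n).symm)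
  obtain ⟨S, hS, hdet⟩ := hL.exists_isSymm_det_mul_add_ne_zero
  obtain ⟨W, hW, hWdet⟩ := exists_isSymm_det_mul_map_algebraMap_add_ne_zero (O := O) hS hdet
  exact ⟨1, W, by simp, by simpa using hW, by simpa using hWdet⟩

/-- Given `C, D` over the fraction field with `C ᵗD` symmetric and `(C D)` of rank `n`,
there are `G ∈ GL_n(O)` and `W ∈ O^{n×n}` (with `W ᵗG` symmetric, so that the Siegel
parabolic element `(ᵗG⁻¹ W; 0 G)` is symplectic) such that `det(CW + DG) ≠ 0`. -/
theorem exists_parabolic_making_lower_right_invertible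
    (O : Type*) [CommRing O] [IsDomain O] [IsDedekindDomain O]
    (F : Type*) [Field F] [Algebra O F] [IsFractionRing O F]
    (n : ℕ) (C D : Matrix (Fin n) (Fin n) F)
    (h1 : (C * Dᵀ).IsSymm)
    (h2 : (Matrix.of fun (i : Fin n) (j : Fin n ⊕ Fin n) => Sum.elim (C i) (D i) j).rank = n) :
    ∃ (G W : Matrix (Fin n) (Fin n) O),
      IsUnit G.det ∧ (W * Gᵀ).IsSymm ∧
        (C * W.map (algebraMap O F) + D * G.map (algebraMap O F)).det ≠ 0 :=
  exists_parabolic_making_lower_right_invertible_general O F n C D h1 h2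
end
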